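/- Chain Rule for sc¹-maps between open subsets of splicing cores: let O, O', O'' be open subsets of splicing cores, and let f : O → O' and g : O' → O'' be sc¹. Then g ∘ f : O → O'' is sc¹ and T(g ∘ f) = (Tg) ∘ (Tf); moreover Tf and Tg are sc⁰. -/

import Mathlib

universe u v

/-- The data of an sc-scale on an ambient real vector space `E`:
a sequence of levels (submodules of `E`) together with a norm function for each level. -/
structure ScScale (E : Type u) [AddCommGroup E] [Module ℝ E] where
  level : ℕ → Submodule ℝ E
  lnorm : ℕ → E → ℝ

namespace ScScale

variable {E : Type u} {F : Type v} [AddCommGroup E] [Module ℝ E] [AddCommGroup F] [Module ℝ F]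

/-- The axioms making an sc-scale into an sc-Banach space structure: the levels are nested,
each level norm is a genuine complete norm on its level, the inclusion of a level into
any lower level is a compact (bounded) operator, and the intersection `E∞` of all levels
is dense in every level. -/
def IsScBanach (S : ScScale E) : Prop :=
  (∀ {m n : ℕ}, m ≤ n → S.level n ≤ S.level m) ∧
  (∀ m x, 0 ≤ S.lnorm m x) ∧
  (∀ m, ∀ x ∈ S.level m, ∀ y ∈ S.level m, S.lnorm m (x + y) ≤ S.lnorm m x + S.lnorm m y) ∧
  (∀ m (c : ℝ), ∀ x ∈ S.level m, S.lnorm m (c • x) = |c| * S.lnorm m x) ∧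
  (∀ m, ∀ x ∈ S.level m, S.lnorm m x = 0 → x = 0) ∧
  (∀ m n, m ≤ n → ∃ C > (0:ℝ), ∀ x ∈ S.level n, S.lnorm m x ≤ C * S.lnorm n x) ∧
  (∀ m (u : ℕ → E), (∀ k, u k ∈ S.level m) →
      (∀ ε > (0:ℝ), ∃ K, ∀ p ≥ K, ∀ q ≥ K, S.lnorm m (u p - u q) < ε) →
      ∃ x ∈ S.level m, ∀ ε > (0:ℝ), ∃ K, ∀ p ≥ K, S.lnorm m (u p - x) < ε) ∧
  (∀ m (u : ℕ → E), (∀ k, u k ∈ S.level (m+1)) → (∀ k, S.lnorm (m+1) (u k) ≤ 1) →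
      ∃ φ : ℕ → ℕ, StrictMono φ ∧
        ∀ ε > (0:ℝ), ∃ K, ∀ p ≥ K, ∀ q ≥ K, S.lnorm m (u (φ p) - u (φ q)) < ε) ∧
  (∀ m, ∀ x ∈ S.level m, ∀ ε > (0:ℝ), ∃ y, (∀ n, y ∈ S.level n) ∧ S.lnorm m (x - y) < ε)

/-- `U` is an open subset of the sc-space: it is contained in the `0`-level and open
with respect to the level-`0` norm topology. -/
def IsOpenIn (S : ScScale E) (U : Set E) : Prop :=
  U ⊆ (S.level 0 : Set E) ∧
  ∀ x ∈ U, ∃ ε > (0:ℝ), ∀ y ∈ (S.level 0 : Set E), S.lnorm 0 (y - x) < ε → y ∈ U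

/-- The tangent scale `TE` with `(TE)ₘ = E_{m+1} ⊕ Eₘ`, realized on `E × E`. -/
def tangent (S : ScScale E) : ScScale (E × E) where
  level m := (S.level (m+1)).prod (S.level m)
  lnorm m p := S.lnorm (m+1) p.1 + S.lnorm m p.2

/-- The tangent set `TU = U₁ ⊕ E` of a set `U`. -/
def tangentSet (S : ScScale E) (U : Set E) : Set (E × E) :=
  {p | p.1 ∈ U ∧ p.1 ∈ S.level 1 ∧ p.2 ∈ S.level 0}

/-- The shifted scale `E^k` with `(E^k)ₘ = E_{m+k}`. -/
def shift (S : ScScale E) (k : ℕ) : ScScale E where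
  level m := S.level (m + k)
  lnorm m := S.lnorm (m + k)

/-- The direct sum of two sc-scales. -/
def prod (S : ScScale E) (T : ScScale F) : ScScale (E × F) where
  level m := (S.level m).prod (T.level m)
  lnorm m p := S.lnorm m p.1 + T.lnorm m p.2

end ScScale

/-- `f : U → F` is of class sc⁰: it preserves all levels and is continuous on every level
with respect to the level norms. -/
def Sc0 {E : Type u} {F : Type v} [AddCommGroup E] [Module ℝ E] [AddCommGroup F] [Module ℝ F]
    (SE : ScScale E) (SF : ScScale F) (U : Set E) (f : E → F) : Prop :=
  ∀ m : ℕ,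
    (∀ x ∈ U ∩ (SE.level m : Set E), f x ∈ SF.level m) ∧
    (∀ x ∈ U ∩ (SE.level m : Set E), ∀ ε > (0:ℝ), ∃ δ > (0:ℝ),
      ∀ y ∈ U ∩ (SE.level m : Set E),
        SE.lnorm m (y - x) < δ → SF.lnorm m (f y - f x) < ε)

/-- The tangent map `Tf(x,h) = (f(x), Df(x)h)` associated to `f` and a family of
linearizations `Df`. -/
def Tmap {E : Type u} {F : Type v} [AddCommGroup E] [Module ℝ E] [AddCommGroup F] [Module ℝ F]
    (f : E → F) (Df : E → (E →ₗ[ℝ] F)) : E × E → F × F :=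
  fun p => (f p.1, Df p.1 p.2)

/-- `Df` witnesses that `f` is of class sc¹ on `U`: at every point `x ∈ U₁` the linear
map `Df x` is bounded from level 0 to level 0 and is the sc-differential of `f` at `x`
(a Fréchet-type limit taken from level 1 into level 0), and the tangent map
`Tf : TU → TF` is sc⁰. -/
def Sc1With {E : Type u} {F : Type v} [AddCommGroup E] [Module ℝ E] [AddCommGroup F] [Module ℝ F]
    (SE : ScScale E) (SF : ScScale F) (U : Set E) (f : E → F)
    (Df : E → (E →ₗ[ℝ] F)) : Prop :=
  (∀ x ∈ U ∩ (SE.level 1 : Set E),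
    (∃ C : ℝ, ∀ h ∈ SE.level 0, SF.lnorm 0 (Df x h) ≤ C * SE.lnorm 0 h) ∧
    (∀ ε > (0:ℝ), ∃ δ > (0:ℝ), ∀ h ∈ (SE.level 1 : Set E),
      x + h ∈ U → SE.lnorm 1 h < δ →
        SF.lnorm 0 (f (x + h) - f x - Df x h) ≤ ε * SE.lnorm 1 h)) ∧
  Sc0 SE.tangent SF.tangent (SE.tangentSet U) (Tmap f Df)

/-- `f` is of class sc¹ on `U`. -/
def IsSc1 {E : Type u} {F : Type v} [AddCommGroup E] [Module ℝ E] [AddCommGroup F] [Module ℝ F]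
    (SE : ScScale E) (SF : ScScale F) (U : Set E) (f : E → F) : Prop :=
  Sc0 SE SF U f ∧ ∃ Df : E → (E →ₗ[ℝ] F), Sc1With SE SF U f Df

/-- `f` is of class sc^k on `U`, defined inductively via tangent maps. -/
def IsSck (k : ℕ) {E : Type u} {F : Type v} [AddCommGroup E] [Module ℝ E]
    [AddCommGroup F] [Module ℝ F]
    (SE : ScScale E) (SF : ScScale F) (U : Set E) (f : E → F) : Prop :=
  match k with
  | 0 => Sc0 SE SF U f
  | k + 1 => Sc0 SE SF U f ∧ ∃ Df : E → (E →ₗ[ℝ] F), Sc1With SE SF U f Df ∧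
      IsSck k SE.tangent SF.tangent (SE.tangentSet U) (Tmap f Df)

/-- A partial cone in a finite-dimensional vector space `A`: the image of
`[0,∞)^k × ℝ^{n-k}` under a linear isomorphism `ℝⁿ ≅ A`. -/
def IsPartialCone {A : Type*} [AddCommGroup A] [Module ℝ A] (C : Set A) : Prop :=
  ∃ (n k : ℕ) (T : A ≃ₗ[ℝ] (Fin n → ℝ)), k ≤ n ∧
    C = {a : A | ∀ i : Fin n, (i : ℕ) < k → 0 ≤ T a i}

/-- The constant sc-structure on a normed space `A`. -/
noncomputable def constScale (A : Type*) [NormedAddCommGroup A] [NormedSpace ℝ A] :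
    ScScale A where
  level _ := ⊤
  lnorm _ a := ‖a‖

/-- `(π, E, V)` is an sc-smooth splicing. -/
noncomputable def IsScSplicing {A : Type*} {E : Type*}
    [NormedAddCommGroup A] [NormedSpace ℝ A] [AddCommGroup E] [Module ℝ E]
    (V : Set A) (SE : ScScale E) (π : A → E → E) : Prop :=
  (∃ C : Set A, IsPartialCone C ∧ ∃ O : Set A, IsOpen O ∧ V = O ∩ C) ∧
  (∀ m : ℕ, ∀ v ∈ V, ∀ e ∈ SE.level m, π v e ∈ SE.level m) ∧
  (∀ v ∈ V, ∀ e ∈ SE.level 0, π v (π v e) = π v e) ∧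
  (∀ v ∈ V, ∀ e ∈ SE.level 0, ∀ e' ∈ SE.level 0, π v (e + e') = π v e + π v e') ∧
  (∀ v ∈ V, ∀ c : ℝ, ∀ e ∈ SE.level 0, π v (c • e) = c • π v e) ∧
  (∀ m : ℕ, ∀ v ∈ V, ∃ C : ℝ, ∀ e ∈ SE.level m, SE.lnorm m (π v e) ≤ C * SE.lnorm m e) ∧
  (∀ k : ℕ, IsSck k ((constScale A).prod SE) SE
      {p : A × E | p.1 ∈ V ∧ p.2 ∈ SE.level 0} (fun p => π p.1 p.2))

/-- The splicing core `K^𝒮 = {(v,e) ∈ V ⊕ E | π_v e = e}`. -/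
def spliceCore {A : Type*} {E : Type*}
    [NormedAddCommGroup A] [NormedSpace ℝ A] [AddCommGroup E] [Module ℝ E]
    (V : Set A) (SE : ScScale E) (π : A → E → E) : Set (A × E) :=
  {p | p.1 ∈ V ∧ p.2 ∈ SE.level 0 ∧ π p.1 p.2 = p.2}

/-- `O` is an open subset of the set `K` (e.g. of a splicing core), with respect to
the level-0 distance of the scale `S`. -/
def IsOpenInCore {X : Type*} [AddCommGroup X] [Module ℝ X]
    (S : ScScale X) (K O : Set X) : Prop :=
  O ⊆ K ∧ ∀ x ∈ O, ∃ ε > (0:ℝ), ∀ y ∈ K, S.lnorm 0 (y - x) < ε → y ∈ O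

/-- The "hat" map `(v,e) ↦ f (v, π_v e)` associated to a map on an open subset of
a splicing core; it is defined on an open subset of `V ⊕ E`. -/
def coreHat {A : Type*} {E : Type*} {Y : Type*} (π : A → E → E) (f : A × E → Y) :
    A × E → Y :=
  fun p => f (p.1, π p.1 p.2)

/-- The natural domain of the hat map over `O`. -/
def coreDom {A : Type*} {E : Type*}
    [NormedAddCommGroup A] [NormedSpace ℝ A] [AddCommGroup E] [Module ℝ E]
    (V : Set A) (SE : ScScale E) (π : A → E → E) (O : Set (A × E)) : Set (A × E) :=
  {p | p.1 ∈ V ∧ p.2 ∈ SE.level 0 ∧ (p.1, π p.1 p.2) ∈ O}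

/-- `f : O → O'` between open subsets of splicing cores is sc¹: it is sc⁰,
maps `O` into `O'`, and the associated hat map `(v,e) ↦ f(v, π_v e)` is sc¹. -/
def IsCoreSc1 {A B : Type*} {E F : Type*}
    [NormedAddCommGroup A] [NormedSpace ℝ A] [AddCommGroup E] [Module ℝ E]
    [NormedAddCommGroup B] [NormedSpace ℝ B] [AddCommGroup F] [Module ℝ F]
    (V : Set A) (SE : ScScale E) (π : A → E → E) (O : Set (A × E))
    (W : Set B) (SF : ScScale F) (σ : B → F → F) (O' : Set (B × F))
    (f : A × E → B × F) : Prop :=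
  Sc0 ((constScale A).prod SE) ((constScale B).prod SF) O f ∧
  Set.MapsTo f O O' ∧
  ∃ D : A × E → ((A × E) →ₗ[ℝ] (B × F)),
    Sc1With ((constScale A).prod SE) ((constScale B).prod SF)
      (coreDom V SE π O) (coreHat π f) D


set_option maxHeartbeats 1000000

section ChainAux

variable {E : Type*} [AddCommGroup E] [Module ℝ E]

/-- Bundled axioms we need (IsScBanach minus density). -/
structure GoodScale (S : ScScale E) : Prop where
  nested : ∀ {m n : ℕ}, m ≤ n → S.level n ≤ S.level m
  nonneg : ∀ m x, 0 ≤ S.lnorm m x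
  tri : ∀ m, ∀ x ∈ S.level m, ∀ y ∈ S.level m, S.lnorm m (x + y) ≤ S.lnorm m x + S.lnorm m y
  homog : ∀ m (c : ℝ), ∀ x ∈ S.level m, S.lnorm m (c • x) = |c| * S.lnorm m x
  defin : ∀ m, ∀ x ∈ S.level m, S.lnorm m x = 0 → x = 0
  cross : ∀ m n, m ≤ n → ∃ C > (0:ℝ), ∀ x ∈ S.level n, S.lnorm m x ≤ C * S.lnorm n x
  compl : ∀ m (u : ℕ → E), (∀ k, u k ∈ S.level m) →
      (∀ ε > (0:ℝ), ∃ K, ∀ p ≥ K, ∀ q ≥ K, S.lnorm m (u p - u q) < ε) →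
      ∃ x ∈ S.level m, ∀ ε > (0:ℝ), ∃ K, ∀ p ≥ K, S.lnorm m (u p - x) < ε
  cpt : ∀ m (u : ℕ → E), (∀ k, u k ∈ S.level (m+1)) → (∀ k, S.lnorm (m+1) (u k) ≤ 1) →
      ∃ φ : ℕ → ℕ, StrictMono φ ∧
        ∀ ε > (0:ℝ), ∃ K, ∀ p ≥ K, ∀ q ≥ K, S.lnorm m (u (φ p) - u (φ q)) < ε

theorem GoodScale.of_isScBanach {S : ScScale E} (h : S.IsScBanach) : GoodScale S := by
  obtain ⟨h1, h2, h3, h4, h5, h6, h7, h8, _⟩ := h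
  exact ⟨h1, h2, h3, h4, h5, h6, h7, h8⟩

theorem GoodScale.lnorm_zero {S : ScScale E} (h : GoodScale S) (m : ℕ) :
    S.lnorm m 0 = 0 := by
  have := h.homog m 0 0 (zero_mem _)
  simpa using this

theorem GoodScale.lnorm_neg {S : ScScale E} (h : GoodScale S) (m : ℕ) {x : E}
    (hx : x ∈ S.level m) : S.lnorm m (-x) = S.lnorm m x := by
  have := h.homog m (-1) x hx
  simpa using this

theorem GoodScale.lnorm_sub_comm {S : ScScale E} (h : GoodScale S) (m : ℕ) {x y : E}
    (hx : x ∈ S.level m) (hy : y ∈ S.level m) :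
    S.lnorm m (x - y) = S.lnorm m (y - x) := by
  have := h.lnorm_neg m (sub_mem hy hx)
  simpa using this

/-- triangle for three terms -/
theorem GoodScale.tri3 {S : ScScale E} (h : GoodScale S) (m : ℕ) {x y z : E}
    (hx : x ∈ S.level m) (hy : y ∈ S.level m) (hz : z ∈ S.level m) :
    S.lnorm m (x + y + z) ≤ S.lnorm m x + S.lnorm m y + S.lnorm m z :=
  le_trans (h.tri m _ (add_mem hx hy) _ hz)
    (by have := h.tri m x hx y hy; linarith)

theorem goodProd {A : Type*} [NormedAddCommGroup A] [NormedSpace ℝ A]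
    [FiniteDimensional ℝ A] {SE : ScScale E} (h : GoodScale SE) :
    GoodScale ((constScale A).prod SE) where
  nested := by
    intro m n hmn p hp
    rcases Submodule.mem_prod.1 hp with ⟨h1, h2⟩
    exact Submodule.mem_prod.2 ⟨trivial, h.nested hmn h2⟩
  nonneg := by
    intro m p
    have := h.nonneg m p.2
    have h2 : (0:ℝ) ≤ ‖p.1‖ := norm_nonneg _
    show 0 ≤ ‖p.1‖ + SE.lnorm m p.2
    linarith
  tri := by
    intro m x hx y hy
    rcases Submodule.mem_prod.1 hx with ⟨-, hx2⟩
    rcases Submodule.mem_prod.1 hy with ⟨-, hy2⟩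
    show ‖(x+y).1‖ + SE.lnorm m (x+y).2 ≤ _
    have h1 : ‖(x+y).1‖ ≤ ‖x.1‖ + ‖y.1‖ := norm_add_le _ _
    have h2 := h.tri m x.2 hx2 y.2 hy2
    show ‖x.1 + y.1‖ + SE.lnorm m (x.2 + y.2) ≤
      (‖x.1‖ + SE.lnorm m x.2) + (‖y.1‖ + SE.lnorm m y.2)
    simp only [Prod.fst_add, Prod.snd_add] at h1 h2 ⊢
    linarith
  homog := by
    intro m c x hx
    rcases Submodule.mem_prod.1 hx with ⟨-, hx2⟩
    show ‖(c • x).1‖ + SE.lnorm m (c • x).2 = |c| * (‖x.1‖ + SE.lnorm m x.2)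
    have h1 : ‖c • x.1‖ = |c| * ‖x.1‖ := by
      rw [norm_smul, Real.norm_eq_abs]
    have h2 := h.homog m c x.2 hx2
    simp only [Prod.smul_fst, Prod.smul_snd]
    rw [h1, h2]; ring
  defin := by
    intro m x hx hx0
    rcases Submodule.mem_prod.1 hx with ⟨-, hx2⟩
    have h1 : (0:ℝ) ≤ ‖x.1‖ := norm_nonneg _
    have h2 := h.nonneg m x.2
    have hx0' : ‖x.1‖ + SE.lnorm m x.2 = 0 := hx0
    have e1 : ‖x.1‖ = 0 := by linarith
    have e2 : SE.lnorm m x.2 = 0 := by linarith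
    have : x.1 = 0 := norm_eq_zero.1 e1
    have : x.2 = 0 := h.defin m x.2 hx2 e2
    exact Prod.ext ‹x.1 = 0› this
  cross := by
    intro m n hmn
    obtain ⟨C, hC, hbd⟩ := h.cross m n hmn
    refine ⟨max C 1, lt_of_lt_of_le one_pos (le_max_right _ _), ?_⟩
    intro x hx
    rcases Submodule.mem_prod.1 hx with ⟨-, hx2⟩
    show ‖x.1‖ + SE.lnorm m x.2 ≤ max C 1 * (‖x.1‖ + SE.lnorm n x.2)
    have h1 : ‖x.1‖ ≤ max C 1 * ‖x.1‖ :=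
      le_mul_of_one_le_left (norm_nonneg _) (le_max_right _ _)
    have h2 : SE.lnorm m x.2 ≤ C * SE.lnorm n x.2 := hbd x.2 hx2
    have h3 : C * SE.lnorm n x.2 ≤ max C 1 * SE.lnorm n x.2 :=
      mul_le_mul_of_nonneg_right (le_max_left _ _) (h.nonneg n x.2)
    nlinarith [h.nonneg n x.2, norm_nonneg x.1]
  compl := by
    intro m u hu hcau
    have hcauA : CauchySeq (fun k => (u k).1) := by
      rw [Metric.cauchySeq_iff]
      intro ε hε
      obtain ⟨K, hK⟩ := hcau ε hε
      refine ⟨K, fun p hp q hq => ?_⟩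
      have := hK p hp q hq
      have hle : ‖(u p - u q).1‖ ≤ ‖(u p - u q).1‖ + SE.lnorm m (u p - u q).2 := by
        have := h.nonneg m (u p - u q).2; linarith
      calc dist (u p).1 (u q).1 = ‖(u p).1 - (u q).1‖ := dist_eq_norm _ _
        _ = ‖(u p - u q).1‖ := by simp
        _ ≤ ‖(u p - u q).1‖ + SE.lnorm m (u p - u q).2 := hle
        _ < ε := this
    obtain ⟨a, ha⟩ := cauchySeq_tendsto_of_complete hcauA
    have hcauE : ∀ ε > (0:ℝ), ∃ K, ∀ p ≥ K, ∀ q ≥ K,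
        SE.lnorm m ((u p).2 - (u q).2) < ε := by
      intro ε hε
      obtain ⟨K, hK⟩ := hcau ε hε
      refine ⟨K, fun p hp q hq => ?_⟩
      have := hK p hp q hq
      have hge : (0:ℝ) ≤ ‖(u p - u q).1‖ := norm_nonneg _
      have : ‖(u p - u q).1‖ + SE.lnorm m (u p - u q).2 < ε := this
      have heq : (u p - u q).2 = (u p).2 - (u q).2 := rfl
      rw [heq] at this
      linarith
    obtain ⟨xE, hxE, hconv⟩ := h.compl m (fun k => (u k).2) (fun k => (Submodule.mem_prod.1 (hu k)).2) hcauE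
    refine ⟨(a, xE), Submodule.mem_prod.2 ⟨trivial, hxE⟩, ?_⟩
    intro ε hε
    obtain ⟨K1, hK1⟩ := (Metric.tendsto_atTop.1 ha) (ε/2) (by linarith)
    obtain ⟨K2, hK2⟩ := hconv (ε/2) (by linarith)
    refine ⟨max K1 K2, fun p hp => ?_⟩
    have h1 := hK1 p (le_trans (le_max_left _ _) hp)
    have h2 := hK2 p (le_trans (le_max_right _ _) hp)
    show ‖(u p - (a, xE)).1‖ + SE.lnorm m (u p - (a, xE)).2 < ε
    have e1 : (u p - (a, xE)).1 = (u p).1 - a := rfl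
    have e2 : (u p - (a, xE)).2 = (u p).2 - xE := rfl
    rw [e1, e2]
    rw [dist_eq_norm] at h1
    linarith
  cpt := by
    intro m u hu hbd
    have hball : ∀ k, (u k).1 ∈ Metric.closedBall (0:A) 1 := by
      intro k
      have h1 := hbd k
      have h2 := h.nonneg (m+1) (u k).2
      have : ‖(u k).1‖ ≤ 1 := by
        have : ‖(u k).1‖ + SE.lnorm (m+1) (u k).2 ≤ 1 := h1
        linarith
      simpa [Metric.mem_closedBall, dist_eq_norm] using this
    obtain ⟨a, -, φ, hφ, hconv⟩ :=
      (isCompact_closedBall (0:A) 1).tendsto_subseq hball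
    obtain ⟨ψ, hψ, hcauE⟩ := h.cpt m (fun k => (u (φ k)).2)
      (fun k => (Submodule.mem_prod.1 (hu (φ k))).2)
      (fun k => by
        have h1 := hbd (φ k)
        have h2 : (0:ℝ) ≤ ‖(u (φ k)).1‖ := norm_nonneg _
        have : ‖(u (φ k)).1‖ + SE.lnorm (m+1) (u (φ k)).2 ≤ 1 := h1
        linarith)
    refine ⟨φ ∘ ψ, hφ.comp hψ, ?_⟩
    intro ε hε
    have hconv2 : Filter.Tendsto (fun k => (u (φ (ψ k))).1) Filter.atTop (nhds a) :=
      hconv.comp hψ.tendsto_atTop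
    obtain ⟨K1, hK1⟩ := Metric.tendsto_atTop.1 hconv2 (ε/4) (by linarith)
    obtain ⟨K2, hK2⟩ := hcauE (ε/2) (by linarith)
    refine ⟨max K1 K2, fun p hp q hq => ?_⟩
    have p1 := hK1 p (le_trans (le_max_left _ _) hp)
    have q1 := hK1 q (le_trans (le_max_left _ _) hq)
    have pq2 := hK2 p (le_trans (le_max_right _ _) hp) q (le_trans (le_max_right _ _) hq)
    show ‖(u (φ (ψ p)) - u (φ (ψ q))).1‖ + SE.lnorm m (u (φ (ψ p)) - u (φ (ψ q))).2 < ε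
    have e1 : (u (φ (ψ p)) - u (φ (ψ q))).1 = (u (φ (ψ p))).1 - (u (φ (ψ q))).1 := rfl
    have e2 : (u (φ (ψ p)) - u (φ (ψ q))).2 = (u (φ (ψ p))).2 - (u (φ (ψ q))).2 := rfl
    rw [e1, e2]
    have hA : ‖(u (φ (ψ p))).1 - (u (φ (ψ q))).1‖ < ε/2 := by
      have hd : (u (φ (ψ p))).1 - (u (φ (ψ q))).1
          = ((u (φ (ψ p))).1 - a) + (a - (u (φ (ψ q))).1) := by abel
      rw [hd]
      have t1 := norm_add_le ((u (φ (ψ p))).1 - a) (a - (u (φ (ψ q))).1)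
      have t2 : ‖a - (u (φ (ψ q))).1‖ = ‖(u (φ (ψ q))).1 - a‖ := norm_sub_rev _ _
      rw [dist_eq_norm] at p1 q1
      linarith
    linarith

end ChainAux
section ChainAux2

variable {E : Type*} {F : Type*} {G : Type*}
  [AddCommGroup E] [Module ℝ E] [AddCommGroup F] [Module ℝ F] [AddCommGroup G] [Module ℝ G]

theorem Sc0_comp_maps {SE : ScScale E} {SF : ScScale F} {SG : ScScale G}
    {U : Set E} {U' : Set F} {f : E → F} {g : F → G}
    (hf : Sc0 SE SF U f) (hg : Sc0 SF SG U' g) (hmap : ∀ x ∈ U, f x ∈ U') :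
    Sc0 SE SG U (g ∘ f) := by
  intro m
  refine ⟨?_, ?_⟩
  · rintro x ⟨hxU, hxm⟩
    exact (hg m).1 (f x) ⟨hmap x hxU, (hf m).1 x ⟨hxU, hxm⟩⟩
  · rintro x ⟨hxU, hxm⟩ ε hε
    obtain ⟨δ1, hδ1, H1⟩ := (hg m).2 (f x) ⟨hmap x hxU, (hf m).1 x ⟨hxU, hxm⟩⟩ ε hε
    obtain ⟨δ, hδ, H⟩ := (hf m).2 x ⟨hxU, hxm⟩ δ1 hδ1
    refine ⟨δ, hδ, ?_⟩
    rintro y ⟨hyU, hym⟩ hdist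
    exact H1 (f y) ⟨hmap y hyU, (hf m).1 y ⟨hyU, hym⟩⟩ (H y ⟨hyU, hym⟩ hdist)

theorem tmapMem {SE : ScScale E} {SF : ScScale F} {U : Set E}
    {f : E → F} {Df : E → (E →ₗ[ℝ] F)}
    (hfT : Sc0 SE.tangent SF.tangent (SE.tangentSet U) (Tmap f Df))
    {x h : E} (hxU : x ∈ U) (hx1 : x ∈ SE.level 1) (hh : h ∈ SE.level 0) :
    f x ∈ SF.level 1 ∧ Df x h ∈ SF.level 0 := by
  have hmem : (x, h) ∈ SE.tangentSet U ∩ (SE.tangent.level 0 : Set (E × E)) :=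
    ⟨⟨hxU, hx1, hh⟩, Submodule.mem_prod.2 ⟨hx1, hh⟩⟩
  have h2 := (hfT 0).1 (x, h) hmem
  exact ⟨(Submodule.mem_prod.1 h2).1, (Submodule.mem_prod.1 h2).2⟩

theorem tmapMemM {SE : ScScale E} {SF : ScScale F} {U : Set E}
    {f : E → F} {Df : E → (E →ₗ[ℝ] F)}
    (hfT : Sc0 SE.tangent SF.tangent (SE.tangentSet U) (Tmap f Df))
    {m : ℕ} {x h : E} (hxU : x ∈ U) (hx1 : x ∈ SE.level 1) (hh0 : h ∈ SE.level 0)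
    (hxm : x ∈ SE.level (m+1)) (hhm : h ∈ SE.level m) :
    f x ∈ SF.level (m+1) ∧ Df x h ∈ SF.level m := by
  have hmem : (x, h) ∈ SE.tangentSet U ∩ (SE.tangent.level m : Set (E × E)) :=
    ⟨⟨hxU, hx1, hh0⟩, Submodule.mem_prod.2 ⟨hxm, hhm⟩⟩
  have h2 := (hfT m).1 (x, h) hmem
  exact ⟨(Submodule.mem_prod.1 h2).1, (Submodule.mem_prod.1 h2).2⟩

theorem Sc1With_congr {SE : ScScale E} {SF : ScScale F} {U : Set E}
    {f₁ f₂ : E → F} {D : E → (E →ₗ[ℝ] F)}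
    (h : Sc1With SE SF U f₁ D) (heq : ∀ x ∈ U, f₁ x = f₂ x) :
    Sc1With SE SF U f₂ D := by
  obtain ⟨hpt, hT⟩ := h
  constructor
  · intro x hx
    refine ⟨(hpt x hx).1, ?_⟩
    intro ε hε
    obtain ⟨δ, hδ, H⟩ := (hpt x hx).2 ε hε
    refine ⟨δ, hδ, fun h hh hxh hlt => ?_⟩
    rw [← heq _ hxh, ← heq _ hx.1]
    exact H h hh hxh hlt
  · intro m
    have key : ∀ z ∈ SE.tangentSet U, Tmap f₂ D z = Tmap f₁ D z := by
      intro z hz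
      unfold Tmap
      rw [heq z.1 hz.1]
    refine ⟨?_, ?_⟩
    · intro z hz
      rw [key z hz.1]
      exact (hT m).1 z hz
    · intro z hz ε hε
      obtain ⟨δ, hδ, H⟩ := (hT m).2 z hz ε hε
      refine ⟨δ, hδ, fun w hw hlt => ?_⟩
      rw [key w hw.1, key z hz.1]
      exact H w hw hlt

/-- Mean value inequality on `[0,1]` for the level-0 "norm". -/
theorem mvt_lemma {SG : ScScale G} (hG : GoodScale SG)
    (ψ : ℝ → G) (Aop : ℝ → G) (L : G) (B : ℝ)
    (memψ : ∀ t ∈ Set.Icc (0:ℝ) 1, ψ t ∈ SG.level 0)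
    (memA : ∀ t ∈ Set.Icc (0:ℝ) 1, Aop t ∈ SG.level 0)
    (memL : L ∈ SG.level 0)
    (hder : ∀ t ∈ Set.Icc (0:ℝ) 1, ∀ η > (0:ℝ), ∃ ν > (0:ℝ), ∀ s : ℝ, |s| ≤ ν →
      t + s ∈ Set.Icc (0:ℝ) 1 → SG.lnorm 0 (ψ (t+s) - ψ t - s • Aop t) ≤ η * |s|)
    (hbd : ∀ t ∈ Set.Icc (0:ℝ) 1, SG.lnorm 0 (Aop t - L) ≤ B) :
    SG.lnorm 0 (ψ 1 - ψ 0 - L) ≤ B := by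
  have h0I : (0:ℝ) ∈ Set.Icc (0:ℝ) 1 := ⟨le_refl _, by norm_num⟩
  have hB0 : (0:ℝ) ≤ B :=
    le_trans (hG.nonneg 0 (Aop 0 - L)) (hbd 0 h0I)
  have main : ∀ η > (0:ℝ), SG.lnorm 0 (ψ 1 - ψ 0 - L) ≤ B + η := by
    intro η hη
    set T : Set ℝ := {t | t ∈ Set.Icc (0:ℝ) 1 ∧
      SG.lnorm 0 (ψ t - ψ 0 - t • L) ≤ (B + η) * t} with hTdef
    have h0T : (0:ℝ) ∈ T := by
      refine ⟨h0I, ?_⟩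
      have e : ψ 0 - ψ 0 - (0:ℝ) • L = 0 := by simp
      rw [e, hG.lnorm_zero]
      simp
    have hTne : T.Nonempty := ⟨0, h0T⟩
    have hTbdd : BddAbove T := ⟨1, fun t ht => ht.1.2⟩
    set c := sSup T with hc
    have hc0 : 0 ≤ c := le_csSup hTbdd h0T
    have hc1 : c ≤ 1 := csSup_le hTne (fun t ht => ht.1.2)
    have hcI : c ∈ Set.Icc (0:ℝ) 1 := ⟨hc0, hc1⟩
    have memder : ∀ a ∈ Set.Icc (0:ℝ) 1, ∀ b ∈ Set.Icc (0:ℝ) 1, ∀ d : ℝ,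
        ψ a - ψ b - d • Aop b ∈ SG.level 0 := fun a ha b hb d =>
      sub_mem (sub_mem (memψ a ha) (memψ b hb)) ((SG.level 0).smul_mem d (memA b hb))
    have memP : ∀ a ∈ Set.Icc (0:ℝ) 1, ψ a - ψ 0 - a • L ∈ SG.level 0 := fun a ha =>
      sub_mem (sub_mem (memψ a ha) (memψ 0 h0I)) ((SG.level 0).smul_mem a memL)
    have hPc : SG.lnorm 0 (ψ c - ψ 0 - c • L) ≤ (B + η) * c := by
      obtain ⟨ν, hν, hd⟩ := hder c hcI η hη
      obtain ⟨t, htT, htlt⟩ := exists_lt_of_lt_csSup hTne (by linarith : c - ν < c)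
      have htc : t ≤ c := le_csSup hTbdd htT
      have htI : t ∈ Set.Icc (0:ℝ) 1 := htT.1
      have habs : |t - c| ≤ ν := by
        rw [abs_of_nonpos (by linarith)]; linarith
      have hct : c + (t - c) = t := by ring
      have hder2 : SG.lnorm 0 (ψ t - ψ c - (t - c) • Aop c) ≤ η * (c - t) := by
        have := hd (t - c) habs (by rw [hct]; exact htI)
        rw [hct] at this
        rw [abs_of_nonpos (by linarith : t - c ≤ 0)] at this
        linarith [this]
      have hdec : ψ c - ψ 0 - c • L =
          (ψ t - ψ 0 - t • L) + (-(ψ t - ψ c - (t - c) • Aop c))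
            + (c - t) • (Aop c - L) := by
        module
      have tri := hG.tri3 0 (memP t htI) (neg_mem (memder t htI c hcI (t - c)))
        ((SG.level 0).smul_mem (c - t) (sub_mem (memA c hcI) memL))
      rw [← hdec] at tri
      have e1 : SG.lnorm 0 (-(ψ t - ψ c - (t - c) • Aop c))
          = SG.lnorm 0 (ψ t - ψ c - (t - c) • Aop c) :=
        hG.lnorm_neg 0 (memder t htI c hcI (t - c))
      have e2 : SG.lnorm 0 ((c - t) • (Aop c - L)) ≤ (c - t) * B := by
        rw [hG.homog 0 _ _ (sub_mem (memA c hcI) memL),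
          abs_of_nonneg (by linarith : (0:ℝ) ≤ c - t)]
        exact mul_le_mul_of_nonneg_left (hbd c hcI) (by linarith)
      have hPt := htT.2
      rw [e1] at tri
      nlinarith
    have hceq : c = 1 := by
      by_contra hne
      have hclt : c < 1 := lt_of_le_of_ne hc1 hne
      obtain ⟨ν, hν, hd⟩ := hder c hcI η hη
      set s := min ν (1 - c) with hs
      have hspos : 0 < s := lt_min hν (by linarith)
      have hsν : s ≤ ν := min_le_left _ _
      have hcsI : c + s ∈ Set.Icc (0:ℝ) 1 := by
        constructor
        · linarith
        · have := min_le_right ν (1 - c); linarith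
      have hder2 : SG.lnorm 0 (ψ (c + s) - ψ c - s • Aop c) ≤ η * s := by
        have := hd s (by rw [abs_of_pos hspos]; exact hsν) hcsI
        rw [abs_of_pos hspos] at this
        exact this
      have hdec : ψ (c + s) - ψ 0 - (c + s) • L =
          (ψ c - ψ 0 - c • L) + (ψ (c + s) - ψ c - s • Aop c) + s • (Aop c - L) := by
        module
      have tri := hG.tri3 0 (memP c hcI) (memder (c+s) hcsI c hcI s)
        ((SG.level 0).smul_mem s (sub_mem (memA c hcI) memL))
      rw [← hdec] at tri
      have e2 : SG.lnorm 0 (s • (Aop c - L)) ≤ s * B := by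
        rw [hG.homog 0 _ _ (sub_mem (memA c hcI) memL), abs_of_pos hspos]
        exact mul_le_mul_of_nonneg_left (hbd c hcI) (le_of_lt hspos)
      have hcsT : c + s ∈ T := by
        refine ⟨hcsI, ?_⟩
        nlinarith
      have : c + s ≤ c := le_csSup hTbdd hcsT
      linarith
    have := hPc
    rw [hceq] at this
    simpa using this
  exact le_of_forall_pos_le_add main

end ChainAux2
section ChainAux3

variable {E : Type*} {F : Type*} {G : Type*}
  [AddCommGroup E] [Module ℝ E] [AddCommGroup F] [Module ℝ F] [AddCommGroup G] [Module ℝ G]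

theorem nat_div_small {δ : ℝ} (hδ : 0 < δ) : ∃ N : ℕ, ∀ n ≥ N, (1:ℝ)/(n+1) < δ := by
  obtain ⟨N, hN⟩ := exists_nat_one_div_lt hδ
  refine ⟨N, fun n hn => lt_of_le_of_lt ?_ hN⟩
  apply one_div_le_one_div_of_le
  · positivity
  · have : (N:ℝ) ≤ n := Nat.cast_le.2 hn
    linarith

theorem sc1_comp {SE : ScScale E} {SF : ScScale F} {SG : ScScale G}
    (hE : GoodScale SE) (hF : GoodScale SF) (hG : GoodScale SG)
    {U : Set E} {U' : Set F} {Fh : E → F} {Gh : F → G}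
    {Df : E → (E →ₗ[ℝ] F)} {Dg : F → (F →ₗ[ℝ] G)}
    (hmap : ∀ x ∈ U, Fh x ∈ U')
    (hstar : ∀ y ∈ U', ∃ ε > (0:ℝ), ∀ k ∈ SF.level 0, y + k ∈ U' → SF.lnorm 0 k < ε →
      ∀ t ∈ Set.Icc (0:ℝ) 1, y + t • k ∈ U')
    (hf : Sc1With SE SF U Fh Df) (hg : Sc1With SF SG U' Gh Dg) :
    Sc1With SE SG U (Gh ∘ Fh) (fun p => (Dg (Fh p)).comp (Df p)) := by
  obtain ⟨hfpt, hfT⟩ := hf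
  obtain ⟨hgpt, hgT⟩ := hg
  have nested01E : SE.level 1 ≤ SE.level 0 := hE.nested (by norm_num)
  have nested01F : SF.level 1 ≤ SF.level 0 := hF.nested (by norm_num)
  have nested01G : SG.level 1 ≤ SG.level 0 := hG.nested (by norm_num)
  constructor
  · rintro x ⟨hxU, hx1s⟩
    have hx1 : x ∈ SE.level 1 := hx1s
    set y := Fh x with hydef
    have hyU' : y ∈ U' := hmap x hxU
    have hy1 : y ∈ SF.level 1 := (tmapMem hfT hxU hx1 (zero_mem _)).1
    obtain ⟨Cf, hCf⟩ := (hfpt x ⟨hxU, hx1s⟩).1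
    obtain ⟨Cg, hCg⟩ := (hgpt y ⟨hyU', hy1⟩).1
    set Cf' := max Cf 0 + 1 with hCf'def
    set Cg' := max Cg 0 + 1 with hCg'def
    have hCf'pos : 0 < Cf' := by
      have : (0:ℝ) ≤ max Cf 0 := le_max_right _ _
      linarith
    have hCg'pos : 0 < Cg' := by
      have : (0:ℝ) ≤ max Cg 0 := le_max_right _ _
      linarith
    have hCf' : ∀ h ∈ SE.level 0, SF.lnorm 0 (Df x h) ≤ Cf' * SE.lnorm 0 h := by
      intro h hh
      have b1 := hCf h hh
      have b2 : Cf * SE.lnorm 0 h ≤ Cf' * SE.lnorm 0 h := by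
        apply mul_le_mul_of_nonneg_right _ (hE.nonneg 0 h)
        have : Cf ≤ max Cf 0 := le_max_left _ _
        linarith
      linarith
    have hCg' : ∀ w ∈ SF.level 0, SG.lnorm 0 (Dg y w) ≤ Cg' * SF.lnorm 0 w := by
      intro w hw
      have b1 := hCg w hw
      have b2 : Cg * SF.lnorm 0 w ≤ Cg' * SF.lnorm 0 w := by
        apply mul_le_mul_of_nonneg_right _ (hF.nonneg 0 w)
        have : Cg ≤ max Cg 0 := le_max_left _ _
        linarith
      linarith
    constructor
    · -- boundedness of composed differential
      refine ⟨Cg' * Cf', fun h hh => ?_⟩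
      have hDfh : Df x h ∈ SF.level 0 := (tmapMem hfT hxU hx1 hh).2
      have b1 := hCg' (Df x h) hDfh
      have b2 := hCf' h hh
      calc SG.lnorm 0 ((Dg (Fh x)).comp (Df x) h)
          = SG.lnorm 0 (Dg y (Df x h)) := rfl
        _ ≤ Cg' * SF.lnorm 0 (Df x h) := b1
        _ ≤ Cg' * (Cf' * SE.lnorm 0 h) :=
            mul_le_mul_of_nonneg_left b2 (le_of_lt hCg'pos)
        _ = Cg' * Cf' * SE.lnorm 0 h := by ring
    · -- the Fréchet estimate for the composition
      intro ε hε
      by_contra hcon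
      push_neg at hcon
      have hseq : ∀ n : ℕ, ∃ h, h ∈ SE.level 1 ∧ x + h ∈ U ∧
          SE.lnorm 1 h < 1/(n+1) ∧
          ε * SE.lnorm 1 h <
            SG.lnorm 0 ((Gh ∘ Fh) (x + h) - (Gh ∘ Fh) x - (Dg (Fh x)).comp (Df x) h) := by
        intro n
        obtain ⟨h, hh1, hh2, hh3, hh4⟩ := hcon (1/(n+1)) (by positivity)
        exact ⟨h, hh1, hh2, hh3, hh4⟩
      choose hh H1 H2 H3 H4 using hseq
      set t : ℕ → ℝ := fun n => SE.lnorm 1 (hh n) with htdef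
      have htnn : ∀ n, 0 ≤ t n := fun n => hE.nonneg 1 (hh n)
      have htpos : ∀ n, 0 < t n := by
        intro n
        rcases eq_or_lt_of_le (htnn n) with heq | hlt
        · exfalso
          have hzero : hh n = 0 := hE.defin 1 (hh n) (H1 n) heq.symm
          have h4 := H4 n
          rw [hzero] at h4
          simp only [add_zero, map_zero] at h4
          have : (Gh ∘ Fh) x - (Gh ∘ Fh) x - (0 : G) = 0 := by abel
          rw [this, hG.lnorm_zero] at h4
          have : ε * t n = ε * SE.lnorm 1 (hh n) := rfl
          rw [hzero] at this
          have ht0 : t n = SE.lnorm 1 (hh n) := rfl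
          rw [hzero, ← heq] at ht0
          nlinarith [H4 n, hG.lnorm_zero 0]
        · exact hlt
      set e : ℕ → E := fun n => (t n)⁻¹ • hh n with hedef
      have he1mem : ∀ n, e n ∈ SE.level 1 := fun n =>
        (SE.level 1).smul_mem _ (H1 n)
      have he1 : ∀ n, SE.lnorm 1 (e n) = 1 := by
        intro n
        show SE.lnorm 1 ((t n)⁻¹ • hh n) = 1
        rw [hE.homog 1 _ _ (H1 n), abs_inv, abs_of_pos (htpos n),
          inv_mul_cancel₀ (ne_of_gt (htpos n))]
      obtain ⟨φ, hφ, hcau⟩ := hE.cpt 0 e he1mem (fun n => le_of_eq (he1 n))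
      obtain ⟨eInf, heInf0, hconv⟩ := hE.compl 0 (fun n => e (φ n))
        (fun n => nested01E (he1mem (φ n))) hcau
      -- notation for increments
      set k : ℕ → F := fun n => Fh (x + hh n) - Fh x with hkdef
      have hxh1 : ∀ n, x + hh n ∈ SE.level 1 := fun n => add_mem hx1 (H1 n)
      have hfxh1 : ∀ n, Fh (x + hh n) ∈ SF.level 1 := fun n =>
        (tmapMem hfT (H2 n) (hxh1 n) (zero_mem _)).1
      have hk1 : ∀ n, k n ∈ SF.level 1 := fun n => sub_mem (hfxh1 n) hy1
      have hk0 : ∀ n, k n ∈ SF.level 0 := fun n => nested01F (hk1 n)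
      have hyk : ∀ n, y + k n = Fh (x + hh n) := by
        intro n
        show y + (Fh (x + hh n) - Fh x) = Fh (x + hh n)
        rw [hydef]; abel
      have hykU' : ∀ n, y + k n ∈ U' := fun n => by
        rw [hyk n]; exact hmap _ (H2 n)
      -- (L1) level-1 smallness of k
      have hklim : ∀ η > (0:ℝ), ∃ N, ∀ n ≥ N, SF.lnorm 1 (k n) < η := by
        intro η hη
        obtain ⟨δ, hδ, Hc⟩ := (hfT 0).2 (x, (0:E))
          ⟨⟨hxU, hx1, zero_mem _⟩, Submodule.mem_prod.2 ⟨hx1, zero_mem _⟩⟩ η hη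
        obtain ⟨N, hN⟩ := nat_div_small hδ
        refine ⟨N, fun n hn => ?_⟩
        have hz : (x + hh n, (0:E)) ∈ SE.tangentSet U ∩ (SE.tangent.level 0 : Set (E × E)) :=
          ⟨⟨H2 n, hxh1 n, zero_mem _⟩, Submodule.mem_prod.2 ⟨hxh1 n, zero_mem _⟩⟩
        have hdist : SE.tangent.lnorm 0 ((x + hh n, (0:E)) - (x, (0:E))) < δ := by
          show SE.lnorm 1 (x + hh n - x) + SE.lnorm 0 ((0:E) - 0) < δ
          have e1 : x + hh n - x = hh n := by abel
          have e2 : (0:E) - 0 = 0 := by abel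
          rw [e1, e2, hE.lnorm_zero]
          have := lt_trans (H3 n) (hN n hn)
          linarith
        have hout := Hc (x + hh n, (0:E)) hz hdist
        have hout2 : SF.lnorm 1 (Fh (x + hh n) - Fh x)
            + SF.lnorm 0 (Df (x + hh n) 0 - Df x 0) < η := hout
        rw [map_zero, map_zero] at hout2
        have e3 : (0:F) - 0 = 0 := by abel
        rw [e3, hF.lnorm_zero] at hout2
        show SF.lnorm 1 (Fh (x + hh n) - Fh x) < η
        linarith
      -- (L2) remainder of f
      have hrlim : ∀ η > (0:ℝ), ∃ N, ∀ n ≥ N,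
          SF.lnorm 0 (k n - Df x (hh n)) ≤ η * t n := by
        intro η hη
        obtain ⟨δ, hδ, Hc⟩ := (hfpt x ⟨hxU, hx1s⟩).2 η hη
        obtain ⟨N, hN⟩ := nat_div_small hδ
        refine ⟨N, fun n hn => ?_⟩
        exact Hc (hh n) (H1 n) (H2 n) (lt_trans (H3 n) (hN n hn))
      -- limit of w n = t n ⁻¹ • k n
      set wInf : F := Df x eInf with hwInfdef
      have hwInf0 : wInf ∈ SF.level 0 := (tmapMem hfT hxU hx1 heInf0).2
      have hrmem : ∀ n, k n - Df x (hh n) ∈ SF.level 0 := fun n =>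
        sub_mem (hk0 n) (tmapMem hfT hxU hx1 (nested01E (H1 n))).2
      have hwlim : ∀ η > (0:ℝ), ∃ N, ∀ n ≥ N,
          SF.lnorm 0 ((t (φ n))⁻¹ • k (φ n) - wInf) < η := by
        intro η hη
        obtain ⟨N1, hN1⟩ := hconv (η/(2*Cf')) (by positivity)
        obtain ⟨N2, hN2⟩ := hrlim (η/4) (by positivity)
        refine ⟨max N1 N2, fun n hn => ?_⟩
        set m := φ n with hmdef
        have hmN2 : m ≥ N2 :=
          le_trans (le_trans (le_max_right _ _) hn) (StrictMono.le_apply hφ)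
        have hDfe : Df x (e m) = (t m)⁻¹ • Df x (hh m) := by
          show Df x ((t m)⁻¹ • hh m) = (t m)⁻¹ • Df x (hh m)
          exact map_smul _ _ _
        have hid : (t m)⁻¹ • k m - wInf =
            Df x (e m - eInf) + (t m)⁻¹ • (k m - Df x (hh m)) := by
          have h1 : (t m)⁻¹ • (k m - Df x (hh m)) = (t m)⁻¹ • k m - Df x (e m) := by
            rw [smul_sub, hDfe]
          rw [h1, map_sub, hwInfdef]
          abel
        rw [hid]
        have hmem1 : Df x (e m - eInf) ∈ SF.level 0 :=
          (tmapMem hfT hxU hx1 (sub_mem (nested01E (he1mem m)) heInf0)).2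
        have hmem2 : (t m)⁻¹ • (k m - Df x (hh m)) ∈ SF.level 0 :=
          (SF.level 0).smul_mem _ (hrmem m)
        have tri := hF.tri 0 _ hmem1 _ hmem2
        have b1 : SF.lnorm 0 (Df x (e m - eInf)) ≤ Cf' * SE.lnorm 0 (e m - eInf) :=
          hCf' _ (sub_mem (nested01E (he1mem m)) heInf0)
        have b1' : SE.lnorm 0 (e m - eInf) < η/(2*Cf') :=
          hN1 n (le_trans (le_max_left _ _) hn)
        have b1'' : Cf' * SE.lnorm 0 (e m - eInf) < Cf' * (η/(2*Cf')) :=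
          (mul_lt_mul_iff_right₀ hCf'pos).2 b1'
        have e4 : Cf' * (η/(2*Cf')) = η/2 := by
          field_simp
        have b2 : SF.lnorm 0 ((t m)⁻¹ • (k m - Df x (hh m)))
            = (t m)⁻¹ * SF.lnorm 0 (k m - Df x (hh m)) := by
          rw [hF.homog 0 _ _ (hrmem m), abs_inv, abs_of_pos (htpos m)]
        have b2' : (t m)⁻¹ * SF.lnorm 0 (k m - Df x (hh m)) ≤ (t m)⁻¹ * ((η/4) * t m) := by
          apply mul_le_mul_of_nonneg_left (hN2 m hmN2)
          exact le_of_lt (inv_pos.2 (htpos m))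
        have e5 : (t m)⁻¹ * ((η/4) * t m) = η/4 := by
          field_simp [ne_of_gt (htpos m)]
        rw [e4] at b1''
        rw [e5] at b2'
        rw [b2] at tri
        have c1 : SF.lnorm 0 (Df x (e m - eInf)) < η/2 := lt_of_le_of_lt b1 b1''
        have c2 := add_lt_add_of_lt_of_le c1 b2'
        calc SF.lnorm 0 (Df x (e m - eInf) + (t m)⁻¹ • (k m - Df x (hh m)))
            ≤ SF.lnorm 0 (Df x (e m - eInf))
              + (t m)⁻¹ * SF.lnorm 0 (k m - Df x (hh m)) := tri
          _ < η/2 + η/4 := c2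
          _ < η := by linarith
      -- constants for the main estimate
      obtain ⟨δs, hδs, Hstar⟩ := (hgT 0).2 (y, wInf)
        ⟨⟨hyU', hy1, hwInf0⟩, Submodule.mem_prod.2 ⟨hy1, hwInf0⟩⟩ (ε/8) (by linarith)
      obtain ⟨εy, hεy, Hy⟩ := hstar y hyU'
      obtain ⟨cF, hcF, HcF⟩ := hF.cross 0 1 (by norm_num)
      obtain ⟨N1, hN1⟩ := hklim (min (δs/2) (εy/cF)) (by positivity)
      obtain ⟨N2, hN2⟩ := hrlim (ε/(8*Cg')) (by positivity)
      obtain ⟨N3, hN3⟩ := hwlim (min (δs/2) (ε/(8*Cg'))) (by positivity)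
      set n0 := max N1 (max N2 N3) with hn0
      set m := φ n0 with hm
      have hmge : m ≥ n0 := StrictMono.le_apply hφ
      have hA1 : SF.lnorm 1 (k m) < min (δs/2) (εy/cF) :=
        hN1 m (le_trans (le_max_left _ _) hmge)
      have hA1a : SF.lnorm 1 (k m) < δs/2 := lt_of_lt_of_le hA1 (min_le_left _ _)
      have hA1b : SF.lnorm 0 (k m) < εy := by
        have := HcF (k m) (hk1 m)
        have h2 : cF * SF.lnorm 1 (k m) < cF * (εy/cF) := by
          apply (mul_lt_mul_iff_right₀ hcF).2
          exact lt_of_lt_of_le hA1 (min_le_right _ _)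
        have e6 : cF * (εy/cF) = εy := by field_simp
        linarith [h2, e6, HcF (k m) (hk1 m)]
      have hA2 : SF.lnorm 0 (k m - Df x (hh m)) ≤ (ε/(8*Cg')) * t m :=
        hN2 m (le_trans (le_trans (le_max_left _ _) (le_max_right N1 _)) hmge)
      have hA3 : SF.lnorm 0 ((t m)⁻¹ • k m - wInf) < min (δs/2) (ε/(8*Cg')) :=
        hN3 n0 (le_trans (le_max_right _ _) (le_max_right N1 _))
      set w : F := (t m)⁻¹ • k m with hwdef
      have hw1 : w ∈ SF.level 1 := (SF.level 1).smul_mem _ (hk1 m)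
      have hw0 : w ∈ SF.level 0 := nested01F hw1
      have hkw : t m • w = k m := by
        rw [hwdef, smul_inv_smul₀ (ne_of_gt (htpos m))]
      -- segment stays in U'
      have hseg : ∀ t' ∈ Set.Icc (0:ℝ) 1, y + t' • k m ∈ U' :=
        Hy (k m) (hk0 m) (hykU' m) hA1b
      have hseg1 : ∀ t' : ℝ, y + t' • k m ∈ SF.level 1 := fun t' =>
        add_mem hy1 ((SF.level 1).smul_mem _ (hk1 m))
      -- uniform estimate for the derivative along the segment
      have hinner : ∀ t' ∈ Set.Icc (0:ℝ) 1,
          SG.lnorm 0 (Dg (y + t' • k m) (k m) - Dg y (k m)) ≤ (ε/4) * t m := by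
        intro t' ht'
        set y' := y + t' • k m with hy'def
        have hy'U' : y' ∈ U' := hseg t' ht'
        have hy'1 : y' ∈ SF.level 1 := hseg1 t'
        have hDgy'w : Dg y' w ∈ SG.level 0 := (tmapMem hgT hy'U' hy'1 hw0).2
        have hDgyw : Dg y w ∈ SG.level 0 := (tmapMem hgT hyU' hy1 hw0).2
        have hDgywInf : Dg y wInf ∈ SG.level 0 := (tmapMem hgT hyU' hy1 hwInf0).2
        have hsm : ∀ z : F → G, True := fun _ => trivial
        have hid2 : Dg y' (k m) - Dg y (k m) = t m • (Dg y' w - Dg y w) := by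
          have a1 : Dg y' (k m) = t m • Dg y' w := by
            rw [← hkw]; exact map_smul _ _ _
          have a2 : Dg y (k m) = t m • Dg y w := by
            rw [← hkw]; exact map_smul _ _ _
          rw [a1, a2, smul_sub]
        rw [hid2, hG.homog 0 _ _ (sub_mem hDgy'w hDgyw), abs_of_pos (htpos m)]
        -- reduce to estimating Dg y' w - Dg y w
        have hmain : SG.lnorm 0 (Dg y' w - Dg y w) ≤ ε/4 := by
          have hsplit : Dg y' w - Dg y w = (Dg y' w - Dg y wInf) + (Dg y wInf - Dg y w) := by
            abel
          have m1 : Dg y' w - Dg y wInf ∈ SG.level 0 := sub_mem hDgy'w hDgywInf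
          have m2 : Dg y wInf - Dg y w ∈ SG.level 0 := sub_mem hDgywInf hDgyw
          have tri := hG.tri 0 _ m1 _ m2
          rw [← hsplit] at tri
          have b1 : SG.lnorm 0 (Dg y' w - Dg y wInf) < ε/8 := by
            have hz : (y', w) ∈ SF.tangentSet U' ∩ (SF.tangent.level 0 : Set (F × F)) :=
              ⟨⟨hy'U', hy'1, hw0⟩, Submodule.mem_prod.2 ⟨hy'1, hw0⟩⟩
            have hdist : SF.tangent.lnorm 0 ((y', w) - (y, wInf)) < δs := by
              show SF.lnorm 1 (y' - y) + SF.lnorm 0 (w - wInf) < δs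
              have e7 : y' - y = t' • k m := by rw [hy'def]; abel
              rw [e7, hF.homog 1 _ _ (hk1 m)]
              have ht'abs : |t'| ≤ 1 := by
                rw [abs_of_nonneg ht'.1]; exact ht'.2
              have b3 : |t'| * SF.lnorm 1 (k m) ≤ SF.lnorm 1 (k m) := by
                nlinarith [hF.nonneg 1 (k m), ht'abs, abs_nonneg t']
              have b4 : SF.lnorm 0 (w - wInf) < δs/2 :=
                lt_of_lt_of_le hA3 (min_le_left _ _)
              linarith
            have hout := Hstar (y', w) hz hdist
            have hout2 : SG.lnorm 1 (Gh y' - Gh y) + SG.lnorm 0 (Dg y' w - Dg y wInf)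
                < ε/8 := hout
            have := hG.nonneg 1 (Gh y' - Gh y)
            linarith
          have b2 : SG.lnorm 0 (Dg y wInf - Dg y w) ≤ ε/8 := by
            have e8 : Dg y wInf - Dg y w = Dg y (wInf - w) := (map_sub _ _ _).symm
            rw [e8]
            have b5 := hCg' (wInf - w) (sub_mem hwInf0 hw0)
            have e9 : SF.lnorm 0 (wInf - w) = SF.lnorm 0 (w - wInf) :=
              hF.lnorm_sub_comm 0 hwInf0 hw0
            have b6 : SF.lnorm 0 (w - wInf) ≤ ε/(8*Cg') :=
              le_of_lt (lt_of_lt_of_le hA3 (min_le_right _ _))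
            have b7 : Cg' * SF.lnorm 0 (wInf - w) ≤ Cg' * (ε/(8*Cg')) := by
              apply mul_le_mul_of_nonneg_left _ (le_of_lt hCg'pos)
              rw [e9]; exact b6
            have e10 : Cg' * (ε/(8*Cg')) = ε/8 := by field_simp
            calc SG.lnorm 0 (Dg y (wInf - w)) ≤ Cg' * SF.lnorm 0 (wInf - w) := b5
              _ ≤ Cg' * (ε/(8*Cg')) := b7
              _ = ε/8 := e10
          linarith
        have := mul_le_mul_of_nonneg_left hmain (htnn m)
        calc t m * SG.lnorm 0 (Dg y' w - Dg y w) ≤ t m * (ε/4) := this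
          _ = (ε/4) * t m := by ring
      -- mean value estimate
      have hMVT : SG.lnorm 0 (Gh (y + k m) - Gh y - Dg y (k m)) ≤ (ε/4) * t m := by
        have hres := mvt_lemma hG (fun t' => Gh (y + t' • k m))
          (fun t' => Dg (y + t' • k m) (k m)) (Dg y (k m)) ((ε/4) * t m)
          (fun t' ht' => nested01G (tmapMem hgT (hseg t' ht') (hseg1 t') (zero_mem _)).1)
          (fun t' ht' => (tmapMem hgT (hseg t' ht') (hseg1 t') (hk0 m)).2)
          ((tmapMem hgT hyU' hy1 (hk0 m)).2)
          ?_ hinner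
        · simp only [one_smul, zero_smul, add_zero] at hres
          exact hres
        · -- derivative hypothesis
          intro t' ht' η hη
          set y' := y + t' • k m with hy'def
          set L1 : ℝ := SF.lnorm 1 (k m) with hL1
          have hL1nn : 0 ≤ L1 := hF.nonneg 1 (k m)
          obtain ⟨δt, hδt, Hd⟩ := (hgpt y' ⟨hseg t' ht', hseg1 t'⟩).2
            (η/(L1+1)) (by positivity)
          refine ⟨δt/(L1+1), by positivity, ?_⟩
          intro s hs hts
          have hsk1 : s • k m ∈ SF.level 1 := (SF.level 1).smul_mem _ (hk1 m)
          have hy's : y' + s • k m = y + (t' + s) • k m := by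
            rw [hy'def, add_smul]; abel
          have hy'sU' : y' + s • k m ∈ U' := by
            rw [hy's]; exact hseg (t' + s) hts
          have hsknorm : SF.lnorm 1 (s • k m) < δt := by
            rw [hF.homog 1 _ _ (hk1 m)]
            have : |s| * L1 ≤ (δt/(L1+1)) * L1 :=
              mul_le_mul_of_nonneg_right hs hL1nn
            have h2 : (δt/(L1+1)) * L1 < δt := by
              rw [div_mul_eq_mul_div]
              rw [div_lt_iff₀ (by positivity : (0:ℝ) < L1+1)]
              nlinarith
            exact lt_of_le_of_lt this h2
          have hd2 := Hd (s • k m) hsk1 hy'sU' hsknorm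
          have e13 : Dg y' (s • k m) = s • Dg y' (k m) := map_smul _ _ _
          rw [e13, hF.homog 1 _ _ (hk1 m)] at hd2
          have e14 : η/(L1+1) * (|s| * L1) ≤ η * |s| := by
            rw [div_mul_eq_mul_div]
            rw [div_le_iff₀ (by positivity : (0:ℝ) < L1+1)]
            nlinarith [abs_nonneg s]
          have hgoal : SG.lnorm 0 (Gh (y + (t' + s) • k m) - Gh y' - s • Dg y' (k m))
              ≤ η * |s| := by
            rw [← hy's]
            linarith
          exact hgoal
      -- final contradiction
      have hDgr : SG.lnorm 0 (Dg y (k m - Df x (hh m))) ≤ (ε/8) * t m := by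
        have b8 := hCg' (k m - Df x (hh m)) (hrmem m)
        have b9 : Cg' * SF.lnorm 0 (k m - Df x (hh m)) ≤ Cg' * ((ε/(8*Cg')) * t m) :=
          mul_le_mul_of_nonneg_left hA2 (le_of_lt hCg'pos)
        have e15 : Cg' * ((ε/(8*Cg')) * t m) = (ε/8) * t m := by
          field_simp
        calc SG.lnorm 0 (Dg y (k m - Df x (hh m)))
            ≤ Cg' * SF.lnorm 0 (k m - Df x (hh m)) := b8
          _ ≤ Cg' * ((ε/(8*Cg')) * t m) := b9
          _ = (ε/8) * t m := e15
      have hdec : Gh (y + k m) - Gh y - Dg y (Df x (hh m)) =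
          (Gh (y + k m) - Gh y - Dg y (k m)) + Dg y (k m - Df x (hh m)) := by
        have hsplit : Dg y (k m - Df x (hh m)) = Dg y (k m) - Dg y (Df x (hh m)) :=
          map_sub _ _ _
        rw [hsplit]
        abel
      have hmem3 : Gh (y + k m) - Gh y - Dg y (k m) ∈ SG.level 0 := by
        have a1 : Gh (y + k m) ∈ SG.level 0 := by
          have := (tmapMem hgT (hykU' m) (add_mem hy1 (hk1 m)) (zero_mem _)).1
          exact nested01G this
        have a2 : Gh y ∈ SG.level 0 :=
          nested01G (tmapMem hgT hyU' hy1 (zero_mem _)).1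
        have a3 : Dg y (k m) ∈ SG.level 0 := (tmapMem hgT hyU' hy1 (hk0 m)).2
        exact sub_mem (sub_mem a1 a2) a3
      have hmem4 : Dg y (k m - Df x (hh m)) ∈ SG.level 0 :=
        (tmapMem hgT hyU' hy1 (hrmem m)).2
      have tri := hG.tri 0 _ hmem3 _ hmem4
      rw [← hdec] at tri
      have hfin : SG.lnorm 0 (Gh (y + k m) - Gh y - Dg y (Df x (hh m)))
          ≤ (3*ε/8) * t m := by linarith
      have h4 := H4 m
      have e16 : (Gh ∘ Fh) (x + hh m) - (Gh ∘ Fh) x - (Dg (Fh x)).comp (Df x) (hh m)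
          = Gh (y + k m) - Gh y - Dg y (Df x (hh m)) := by
        rw [hyk m]
        rfl
      rw [e16] at h4
      have ht := htpos m
      nlinarith
  · -- the tangent map is sc⁰ (composition of the two tangent maps)
    have hTmaps : ∀ z ∈ SE.tangentSet U, Tmap Fh Df z ∈ SF.tangentSet U' := by
      rintro z ⟨hzU, hz1, hz0⟩
      exact ⟨hmap z.1 hzU, (tmapMem hfT hzU hz1 hz0).1, (tmapMem hfT hzU hz1 hz0).2⟩
    have hcomp := Sc0_comp_maps hfT hgT hTmaps
    have heq : Tmap Gh Dg ∘ Tmap Fh Df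
        = Tmap (Gh ∘ Fh) (fun p => (Dg (Fh p)).comp (Df p)) := rfl
    rw [heq] at hcomp
    exact hcomp

end ChainAux3
section ChainAux4

variable {B : Type*} {Fv : Type*}
  [NormedAddCommGroup B] [NormedSpace ℝ B] [AddCommGroup Fv] [Module ℝ Fv]

theorem spliceCore_subset_coreDom {W : Set B} {SF : ScScale Fv} {σ : B → Fv → Fv}
    {O' : Set (B × Fv)} (hsub : O' ⊆ spliceCore W SF σ) :
    O' ⊆ coreDom W SF σ O' := by
  intro q hq
  obtain ⟨h1, h2, h3⟩ := hsub hq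
  refine ⟨h1, h2, ?_⟩
  rw [h3, Prod.mk.eta]
  exact hq

set_option maxHeartbeats 1000000 in
theorem coreDom_star {W : Set B} {SF : ScScale Fv} {σ : B → Fv → Fv}
    (hσ : IsScSplicing W SF σ)
    {O' : Set (B × Fv)}
    (hO' : IsOpenInCore ((constScale B).prod SF) (spliceCore W SF σ) O')
    (hFg : GoodScale SF) :
    ∀ y ∈ coreDom W SF σ O', ∃ ε > (0:ℝ), ∀ k ∈ ((constScale B).prod SF).level 0,
      y + k ∈ coreDom W SF σ O' → ((constScale B).prod SF).lnorm 0 k < ε →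
      ∀ t ∈ Set.Icc (0:ℝ) 1, y + t • k ∈ coreDom W SF σ O' := by
  obtain ⟨hcone, hpres, hidem, hadd, hsmul, hbdσ, hsc⟩ := hσ
  obtain ⟨Cset, hCcone, OB, hOB, hWeq⟩ := hcone
  intro y hy
  obtain ⟨hyW, hy0, hyO'⟩ := hy
  obtain ⟨ε1, hε1, hop⟩ := hO'.2 (y.1, σ y.1 y.2) hyO'
  have hσ0 : Sc0 ((constScale B).prod SF) SF
      {p : B × Fv | p.1 ∈ W ∧ p.2 ∈ SF.level 0} (fun p => σ p.1 p.2) := hsc 0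
  obtain ⟨δσ, hδσ, hcont⟩ := (hσ0 0).2 y
    ⟨⟨hyW, hy0⟩, Submodule.mem_prod.2 ⟨trivial, hy0⟩⟩ (ε1/2) (by linarith)
  have hy1OBC : y.1 ∈ OB ∧ y.1 ∈ Cset := by
    have := hyW
    rw [hWeq] at this
    exact this
  obtain ⟨r, hr, hball⟩ := Metric.isOpen_iff.1 hOB y.1 hy1OBC.1
  refine ⟨min r (min δσ (ε1/2)), by positivity, ?_⟩
  intro k hk hyk hksmall t ht
  have hk2 : k.2 ∈ SF.level 0 := (Submodule.mem_prod.1 hk).2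
  have hknorm : ‖k.1‖ + SF.lnorm 0 k.2 < min r (min δσ (ε1/2)) := hksmall
  have hk2nn := hFg.nonneg 0 k.2
  have hk1nn : (0:ℝ) ≤ ‖k.1‖ := norm_nonneg _
  have hk1r : ‖k.1‖ < r := by
    have := min_le_left r (min δσ (ε1/2))
    linarith
  obtain ⟨hykW, hyk0, hykO'⟩ := hyk
  have ht01 : 0 ≤ t ∧ t ≤ 1 := ⟨ht.1, ht.2⟩
  have htk1 : ‖t • k.1‖ ≤ ‖k.1‖ := by
    rw [norm_smul, Real.norm_eq_abs, abs_of_nonneg ht01.1]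
    nlinarith
  -- the base point stays in the cone
  have hvt_cone : y.1 + t • k.1 ∈ Cset := by
    obtain ⟨nn, kk, T, hkn, hCeq⟩ := hCcone
    have hy1C : y.1 ∈ Cset := hy1OBC.2
    have hy1k1C : y.1 + k.1 ∈ Cset := by
      have := hykW
      rw [hWeq] at this
      exact this.2
    rw [hCeq] at hy1C hy1k1C ⊢
    intro i hi
    have e : T (y.1 + t • k.1) i = (1 - t) * T y.1 i + t * (T (y.1 + k.1) i) := by
      rw [map_add, map_add, map_smul]
      simp only [Pi.add_apply, Pi.smul_apply, smul_eq_mul]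
      ring
    rw [e]
    have a1 := hy1C i hi
    have a2 := hy1k1C i hi
    nlinarith [ht01.1, ht01.2]
  have hvt_OB : y.1 + t • k.1 ∈ OB := by
    apply hball
    have : dist (y.1 + t • k.1) y.1 = ‖t • k.1‖ := by
      rw [dist_eq_norm, add_sub_cancel_left]
    rw [Metric.mem_ball, this]
    exact lt_of_le_of_lt htk1 hk1r
  have hvtW : y.1 + t • k.1 ∈ W := by
    rw [hWeq]
    exact ⟨hvt_OB, hvt_cone⟩
  have het0 : y.2 + t • k.2 ∈ SF.level 0 := add_mem hy0 ((SF.level 0).smul_mem t hk2)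
  have hc1 : (y + t • k).1 = y.1 + t • k.1 := rfl
  have hc2 : (y + t • k).2 = y.2 + t • k.2 := rfl
  refine ⟨by rw [hc1]; exact hvtW, by rw [hc2]; exact het0, ?_⟩
  -- openness in the core at ŷ
  apply hop
  · -- splice-core membership
    refine ⟨by rw [hc1]; exact hvtW, ?_, ?_⟩
    · exact hpres 0 _ (by rw [hc1]; exact hvtW) _ (by rw [hc2]; exact het0)
    · exact hidem _ (by rw [hc1]; exact hvtW) _ (by rw [hc2]; exact het0)
  · -- distance estimate
    have hcontp := hcont (y + t • k)
      ⟨⟨by rw [hc1]; exact hvtW, by rw [hc2]; exact het0⟩,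
        Submodule.mem_prod.2 ⟨trivial, by rw [hc2]; exact het0⟩⟩
    have hdist0 : ((constScale B).prod SF).lnorm 0 (y + t • k - y) < δσ := by
      show ‖(y + t • k - y).1‖ + SF.lnorm 0 (y + t • k - y).2 < δσ
      have d1 : (y + t • k - y).1 = t • k.1 := by
        show y.1 + t • k.1 - y.1 = t • k.1
        abel
      have d2 : (y + t • k - y).2 = t • k.2 := by
        show y.2 + t • k.2 - y.2 = t • k.2
        abel
      rw [d1, d2]
      have e2 : SF.lnorm 0 (t • k.2) = |t| * SF.lnorm 0 k.2 := hFg.homog 0 t k.2 hk2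
      have e3 : |t| * SF.lnorm 0 k.2 ≤ SF.lnorm 0 k.2 := by
        rw [abs_of_nonneg ht01.1]
        nlinarith
      have hδ2 : ‖k.1‖ + SF.lnorm 0 k.2 < δσ := by
        have h5 := min_le_left δσ (ε1/2)
        have h6 := min_le_right r (min δσ (ε1/2))
        linarith
      rw [e2]
      linarith
    have hσcont := hcontp hdist0
    -- now assemble
    show ‖((y + t • k).1 - y.1)‖ + SF.lnorm 0 (σ (y + t • k).1 (y + t • k).2 - σ y.1 y.2) < ε1
    have d1 : (y + t • k).1 - y.1 = t • k.1 := by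
      rw [hc1]; abel
    rw [d1]
    have h7 : ‖t • k.1‖ < ε1/2 := by
      have h8 := min_le_right δσ (ε1/2)
      have h9 := min_le_right r (min δσ (ε1/2))
      have : ‖k.1‖ < ε1/2 := by linarith
      linarith [htk1]
    have h10 : SF.lnorm 0 (σ (y + t • k).1 (y + t • k).2 - σ y.1 y.2) < ε1/2 := hσcont
    linarith

end ChainAux4
section ChainAux5

theorem coreHat_comp_eq {A B C : Type*} {E F G : Type*}
    [NormedAddCommGroup A] [NormedSpace ℝ A] [AddCommGroup E] [Module ℝ E]
    [NormedAddCommGroup B] [NormedSpace ℝ B] [AddCommGroup F] [Module ℝ F]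
    {V : Set A} {SE : ScScale E} {π : A → E → E} {O : Set (A × E)}
    {W : Set B} {SF : ScScale F} {σ : B → F → F} {O' : Set (B × F)}
    {f : A × E → B × F} {g : B × F → C × G}
    (hfMaps : Set.MapsTo f O O') (hsub : O' ⊆ spliceCore W SF σ) :
    ∀ p ∈ coreDom V SE π O, coreHat σ g (coreHat π f p) = coreHat π (g ∘ f) p := by
  intro p hp
  have hfp : f (p.1, π p.1 p.2) ∈ O' := hfMaps hp.2.2
  obtain ⟨-, -, h3⟩ := hsub hfp
  show g ((f (p.1, π p.1 p.2)).1, σ (f (p.1, π p.1 p.2)).1 (f (p.1, π p.1 p.2)).2)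
      = g (f (p.1, π p.1 p.2))
  rw [h3, Prod.mk.eta]

end ChainAux5
/-- chain rule for sc¹-maps between open subsets of splicing cores.
If `f : O → O'` and `g : O' → O''` are sc¹ then `g ∘ f : O → O''` is sc¹ and
`T(g ∘ f) = (Tg) ∘ (Tf)`, the latter expressed by the fact that the composed
linearizations of the hat maps witness sc¹ for the hat map of `g ∘ f`; moreover
the tangent maps `Tf` and `Tg` are sc⁰. -/
theorem core_sc1_chain_rule {A B C : Type*} {E F G : Type*}
    [NormedAddCommGroup A] [NormedSpace ℝ A] [FiniteDimensional ℝ A]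
    [NormedAddCommGroup B] [NormedSpace ℝ B] [FiniteDimensional ℝ B]
    [NormedAddCommGroup C] [NormedSpace ℝ C] [FiniteDimensional ℝ C]
    [AddCommGroup E] [Module ℝ E] [AddCommGroup F] [Module ℝ F]
    [AddCommGroup G] [Module ℝ G]
    (SE : ScScale E) (SF : ScScale F) (SG : ScScale G)
    (hSE : SE.IsScBanach) (hSF : SF.IsScBanach) (hSG : SG.IsScBanach)
    (V : Set A) (π : A → E → E) (hπ : IsScSplicing V SE π)
    (W : Set B) (σ : B → F → F) (hσ : IsScSplicing W SF σ)
    (X : Set C) (ρ : C → G → G) (hρ : IsScSplicing X SG ρ)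
    (O : Set (A × E)) (hO : IsOpenInCore ((constScale A).prod SE) (spliceCore V SE π) O)
    (O' : Set (B × F)) (hO' : IsOpenInCore ((constScale B).prod SF) (spliceCore W SF σ) O')
    (O'' : Set (C × G)) (hO'' : IsOpenInCore ((constScale C).prod SG) (spliceCore X SG ρ) O'')
    (f : A × E → B × F) (g : B × F → C × G)
    (hf : IsCoreSc1 V SE π O W SF σ O' f)
    (hg : IsCoreSc1 W SF σ O' X SG ρ O'' g) :
    IsCoreSc1 V SE π O X SG ρ O'' (g ∘ f) ∧
    ∀ (Df : A × E → ((A × E) →ₗ[ℝ] (B × F)))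
      (Dg : B × F → ((B × F) →ₗ[ℝ] (C × G))),
      Sc1With ((constScale A).prod SE) ((constScale B).prod SF)
        (coreDom V SE π O) (coreHat π f) Df →
      Sc1With ((constScale B).prod SF) ((constScale C).prod SG)
        (coreDom W SF σ O') (coreHat σ g) Dg →
      -- T(g ∘ f) = (Tg) ∘ (Tf):
      Sc1With ((constScale A).prod SE) ((constScale C).prod SG)
        (coreDom V SE π O) (coreHat π (g ∘ f))
        (fun p => (Dg (coreHat π f p)).comp (Df p)) ∧
      -- Tf and Tg are sc⁰:
      Sc0 ((constScale A).prod SE).tangent ((constScale B).prod SF).tangent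
        (((constScale A).prod SE).tangentSet (coreDom V SE π O))
        (Tmap (coreHat π f) Df) ∧
      Sc0 ((constScale B).prod SF).tangent ((constScale C).prod SG).tangent
        (((constScale B).prod SF).tangentSet (coreDom W SF σ O'))
        (Tmap (coreHat σ g) Dg) := by
  -- BEGIN PROOF
  have gE : GoodScale ((constScale A).prod SE) := goodProd (GoodScale.of_isScBanach hSE)
  have gF : GoodScale ((constScale B).prod SF) := goodProd (GoodScale.of_isScBanach hSF)
  have gG : GoodScale ((constScale C).prod SG) := goodProd (GoodScale.of_isScBanach hSG)
  obtain ⟨hfSc0, hfMaps, Df0, hDf0⟩ := hf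
  obtain ⟨hgSc0, hgMaps, Dg0, hDg0⟩ := hg
  have hsubg : O' ⊆ coreDom W SF σ O' := spliceCore_subset_coreDom hO'.1
  have hstar := coreDom_star hσ hO' (GoodScale.of_isScBanach hSF)
  have hmap : ∀ p ∈ coreDom V SE π O, coreHat π f p ∈ coreDom W SF σ O' := by
    intro p hp
    exact hsubg (hfMaps hp.2.2)
  have main : ∀ (Df : A × E → ((A × E) →ₗ[ℝ] (B × F)))
      (Dg : B × F → ((B × F) →ₗ[ℝ] (C × G))),
      Sc1With ((constScale A).prod SE) ((constScale B).prod SF)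
        (coreDom V SE π O) (coreHat π f) Df →
      Sc1With ((constScale B).prod SF) ((constScale C).prod SG)
        (coreDom W SF σ O') (coreHat σ g) Dg →
      Sc1With ((constScale A).prod SE) ((constScale C).prod SG)
        (coreDom V SE π O) (coreHat π (g ∘ f))
        (fun p => (Dg (coreHat π f p)).comp (Df p)) ∧
      Sc0 ((constScale A).prod SE).tangent ((constScale B).prod SF).tangent
        (((constScale A).prod SE).tangentSet (coreDom V SE π O))
        (Tmap (coreHat π f) Df) ∧
      Sc0 ((constScale B).prod SF).tangent ((constScale C).prod SG).tangent
        (((constScale B).prod SF).tangentSet (coreDom W SF σ O'))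
        (Tmap (coreHat σ g) Dg) := by
    intro Df Dg hDf hDg
    refine ⟨?_, hDf.2, hDg.2⟩
    have hchain := sc1_comp gE gF gG hmap hstar hDf hDg
    exact Sc1With_congr hchain (coreHat_comp_eq hfMaps hO'.1)
  refine ⟨⟨?_, ?_, ?_⟩, main⟩
  · exact Sc0_comp_maps hfSc0 hgSc0 (fun p hp => hfMaps hp)
  · exact hgMaps.comp hfMaps
  · exact ⟨fun p => (Dg0 (coreHat π f p)).comp (Df0 p), (main Df0 Dg0 hDf0 hDg0).1⟩
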